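/- arXiv:2008.02077 — 2 statements merged into one kernel-verified Lean document; each statement's English description precedes it below -/
import Mathlib

section
/- Suppose a cellular embedding of K_n × K_2 (n ≥ 2) in an orientable surface of genus g has face multiset F, where each face incident with a matching edge has at least 4 sides including at least 2 matching-edge sides, each matching edge contributes exactly 2 face-side incidences overall, and all other faces have at least 3 sides. Then g ≥ (n-2)(n-3)/6. Formally: if |V| = 2n, |E| = n², |F| = f_M + f_T with the faces counted by f_M having total side count ≥ 4n and accounting for all 2n matching-edge sides, faces counted by f_T having total side count ≥ 3·f_T, the total side count equals 2n², and 2 - 2g = 2n - n² + (f_M + f_T), then 6g ≥ (n-2)(n-3). -/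
/-- Arithmetic core of Ringel's genus lower bound for the `n`-prism.
`f_M` counts faces incident with matching edges with total side count `s_M ≥ 4n`,
the other `f_T` faces have total side count `s_T ≥ 3 f_T`, total sides are
`2n²`, and Euler's formula holds; then `6g ≥ (n-2)(n-3)`. -/
theorem prism_genus_lower_bound (n g fM fT sM sT : ℤ) (hn : 2 ≤ n)
    (hfM : fM ≤ n) (hsM : 4 * n ≤ sM) (hsT : 3 * fT ≤ sT)
    (htotal : sM + sT = 2 * n ^ 2)
    (heuler : 2 - 2 * g = 2 * n - n ^ 2 + (fM + fT)) :
    (n - 2) * (n - 3) ≤ 6 * g := by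
  nlinarith [hfM, hsM, hsT, htotal, heuler]
end

section
/- Let n be an integer with 6 ∣ (n-2)(n-3), and consider a cellular embedding of K_n × K_2 into an orientable surface of genus (n-2)(n-3)/6. If integers f_M, f_T, s_M, s_T satisfy f_M ≤ n, s_M ≥ 4n, s_T = 2n² - s_M, 3·f_T ≤ s_T, s_M ≥ 4·f_M and 2 - 2·((n-2)(n-3)/6) = 2n - n² + f_M + f_T, then f_M = n, s_M = 4n, and 3·f_T = s_T = 2n² - 4n. -/
/-- Equality analysis for snug embeddings of the `n`-prism: if the genus equals
`(n-2)(n-3)/6` exactly, the combinatorial constraints force exactly `n`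
quadrilateral faces on matching edges and all other faces triangular. -/
theorem snug_equality_analysis (n fM fT sM sT : ℤ)
    (hfM : fM ≤ n) (hsM : 4 * n ≤ sM) (hsT : sT = 2 * n ^ 2 - sM)
    (hfT : 3 * fT ≤ sT) (hsMfM : 4 * fM ≤ sM)
    (hdvd : (6 : ℤ) ∣ (n - 2) * (n - 3))
    (heuler : 2 - 2 * ((n - 2) * (n - 3) / 6) = 2 * n - n ^ 2 + (fM + fT)) :
    fM = n ∧ sM = 4 * n ∧ 3 * fT = sT ∧ sT = 2 * n ^ 2 - 4 * n := by
  obtain ⟨k, hk⟩ := hdvd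
  have hk6 : (n - 2) * (n - 3) / 6 = k := by
    rw [hk]; exact Int.mul_ediv_cancel_left k (by norm_num)
  rw [hk6] at heuler
  have hk' : n ^ 2 - 5 * n + 6 = 6 * k := by ring_nf; ring_nf at hk; linarith
  have key : 3 * (fM + fT) = 2 * n ^ 2 - n := by linarith
  have h1 : 3 * fT ≤ 2 * n ^ 2 - 4 * n := by linarith
  have hfMn : fM = n := by linarith
  refine ⟨hfMn, ?_, ?_, ?_⟩ <;> linarith
end
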